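/- Let X be a geodesic metric space, let x, y, z ∈ X and let p ≥ 0. If the Gromov product (x|z)_y = ½(d(y,x) + d(y,z) − d(x,z)) satisfies (x|z)_y ≤ p, then for every geodesic α : [0, d(x,y)] → X from x to y and every geodesic β : [0, d(y,z)] → X from y to z, the concatenation ζ : [0, d(x,y) + d(y,z)] → X (defined by ζ(t) = α(t) for t ≤ d(x,y) and ζ(t) = β(t − d(x,y)) for t ≥ d(x,y)) is a (1,2p)-quasi-geodesic. -/

import Mathlib

namespace Paper

variable {X : Type*} [MetricSpace X]

/-- `α : [0,a] → X` is a geodesic from `x` to `y` (necessarily `a = dist x y`). -/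
def IsGeodesicSegment (a : ℝ) (α : ℝ → X) (x y : X) : Prop :=
  0 ≤ a ∧ α 0 = x ∧ α a = y ∧
    ∀ s ∈ Set.Icc (0 : ℝ) a, ∀ t ∈ Set.Icc (0 : ℝ) a, dist (α s) (α t) = |s - t|

/-- `α : [0,a] → X` is a `(lam,k)`-quasi-geodesic. -/
def IsQuasiGeodesic (lam k a : ℝ) (α : ℝ → X) : Prop :=
  0 ≤ a ∧ ∀ s ∈ Set.Icc (0 : ℝ) a, ∀ t ∈ Set.Icc (0 : ℝ) a,
    lam⁻¹ * |s - t| - k ≤ dist (α s) (α t) ∧ dist (α s) (α t) ≤ lam * |s - t| + k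

/-- `X` is a geodesic metric space. -/
def GeodesicSpace (X : Type*) [MetricSpace X] : Prop :=
  ∀ x y : X, ∃ α : ℝ → X, IsGeodesicSegment (dist x y) α x y

/-- `X` is `δ`-hyperbolic: every point of a side of a geodesic triangle is within
distance `δ` of the union of the other two sides (all three sides are covered since
`x, y, z` and the geodesics are universally quantified, hence may be cyclically permuted). -/
def DeltaHyperbolic (δ : ℝ) (X : Type*) [MetricSpace X] : Prop :=
  ∀ x y z : X, ∀ α β γ : ℝ → X,
    IsGeodesicSegment (dist x y) α x y → IsGeodesicSegment (dist y z) β y z →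
    IsGeodesicSegment (dist z x) γ z x →
    ∀ s ∈ Set.Icc (0 : ℝ) (dist x y),
      ∃ t, (t ∈ Set.Icc (0 : ℝ) (dist y z) ∧ dist (α s) (β t) ≤ δ) ∨
           (t ∈ Set.Icc (0 : ℝ) (dist z x) ∧ dist (α s) (γ t) ≤ δ)

theorem IsGeodesicSegment.dist_eq {a : ℝ} {α : ℝ → X} {x y : X}
    (hα : IsGeodesicSegment a α x y) : dist x y = a := by
  obtain ⟨ha, rfl, rfl, hd⟩ := hα
  rw [hd 0 ⟨le_rfl, ha⟩ a ⟨ha, le_rfl⟩, zero_sub, abs_neg, abs_of_nonneg ha]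

theorem IsQuasiGeodesic.mono {lam k k' a : ℝ} {γ : ℝ → X} (hγ : IsQuasiGeodesic lam k a γ)
    (hk : k ≤ k') : IsQuasiGeodesic lam k' a γ :=
  ⟨hγ.1, fun s hs t ht =>
    ⟨by linarith [(hγ.2 s hs t ht).1], by linarith [(hγ.2 s hs t ht).2]⟩⟩

noncomputable def concat {Y : Type*} (a : ℝ) (α β : ℝ → Y) : ℝ → Y :=
  fun t => if t ≤ a then α t else β (t - a)

theorem concat_of_le {Y : Type*} {a t : ℝ} (α β : ℝ → Y) (ht : t ≤ a) :
    concat a α β t = α t :=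
  if_pos ht

theorem concat_of_lt {Y : Type*} {a t : ℝ} (α β : ℝ → Y) (ht : a < t) :
    concat a α β t = β (t - a) :=
  if_neg ht.not_ge

section Concat

variable {a b : ℝ} {α β : ℝ → X} {x y z : X}

theorem IsGeodesicSegment.concat_zero (hα : IsGeodesicSegment a α x y) :
    concat a α β 0 = x := by
  rw [concat_of_le α β hα.1, hα.2.1]

theorem IsGeodesicSegment.concat_add (hα : IsGeodesicSegment a α x y)
    (hβ : IsGeodesicSegment b β y z) : concat a α β (a + b) = z := by
  rcases hβ.1.eq_or_lt with rfl | hb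
  · rw [add_zero, concat_of_le α β le_rfl, hα.2.2.1, ← dist_eq_zero, hβ.dist_eq]
  · rw [concat_of_lt α β (by linarith), add_sub_cancel_left, hβ.2.2.1]

theorem IsGeodesicSegment.dist_concat_le (hα : IsGeodesicSegment a α x y)
    (hβ : IsGeodesicSegment b β y z) {s t : ℝ} (hs : s ∈ Set.Icc 0 (a + b))
    (ht : t ∈ Set.Icc 0 (a + b)) : dist (concat a α β s) (concat a α β t) ≤ |s - t| := by
  wlog hst : s ≤ t generalizing s t
  · rw [dist_comm, abs_sub_comm]
    exact this ht hs (le_of_not_ge hst)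
  obtain ⟨ha, -, hy, hαd⟩ := hα
  obtain ⟨hb, hy', -, hβd⟩ := hβ
  rcases le_or_gt t a with hta | hat
  · rw [concat_of_le α β (hst.trans hta), concat_of_le α β hta]
    exact (hαd s ⟨hs.1, hst.trans hta⟩ t ⟨ht.1, hta⟩).le
  rcases le_or_gt s a with hsa | has
  · rw [concat_of_le α β hsa, concat_of_lt α β hat]
    calc dist (α s) (β (t - a)) ≤ dist (α s) (α a) + dist (β 0) (β (t - a)) := by
          rw [hy, ← hy']; exact dist_triangle _ _ _
      _ = |s - t| := by
          rw [hαd s ⟨hs.1, hsa⟩ a ⟨ha, le_rfl⟩,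
            hβd 0 ⟨le_rfl, hb⟩ (t - a) ⟨by linarith, by linarith [ht.2]⟩,
            abs_of_nonpos (by linarith), abs_of_nonpos (by linarith), abs_of_nonpos (by linarith)]
          ring
  · rw [concat_of_lt α β has, concat_of_lt α β hat,
      hβd (s - a) ⟨by linarith, by linarith [hs.2]⟩ (t - a)
        ⟨by linarith, by linarith [ht.2]⟩,
      sub_sub_sub_cancel_right]

/-- Triangle inequality along `x, ζ s, ζ t, z`, bounding the two outer legs by the
1-Lipschitz property of `ζ = concat a α β`. -/
theorem IsGeodesicSegment.sub_le_dist_concat (hα : IsGeodesicSegment a α x y)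
    (hβ : IsGeodesicSegment b β y z) {s t : ℝ} (hs : s ∈ Set.Icc 0 (a + b))
    (ht : t ∈ Set.Icc 0 (a + b)) :
    |s - t| - (a + b - dist x z) ≤ dist (concat a α β s) (concat a α β t) := by
  wlog hst : s ≤ t generalizing s t
  · rw [dist_comm (concat a α β s), abs_sub_comm]
    exact this ht hs (le_of_not_ge hst)
  have h0 : (0 : ℝ) ∈ Set.Icc 0 (a + b) := ⟨le_rfl, by linarith [hs.1, hs.2]⟩
  have hab : a + b ∈ Set.Icc 0 (a + b) := ⟨h0.2, le_rfl⟩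
  have hxs := hα.dist_concat_le hβ h0 hs
  have htz := hα.dist_concat_le hβ ht hab
  rw [hα.concat_zero, zero_sub, abs_neg, abs_of_nonneg hs.1] at hxs
  rw [hα.concat_add hβ, abs_of_nonpos (by linarith [ht.2])] at htz
  rw [abs_of_nonpos (sub_nonpos.2 hst)]
  linarith [dist_triangle4 x (concat a α β s) (concat a α β t) z]

theorem IsGeodesicSegment.isQuasiGeodesic_concat (hα : IsGeodesicSegment a α x y)
    (hβ : IsGeodesicSegment b β y z) :
    IsQuasiGeodesic 1 (a + b - dist x z) (a + b) (concat a α β) := by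
  refine ⟨add_nonneg hα.1 hβ.1, fun s hs t ht => ⟨?_, ?_⟩⟩
  · rw [inv_one, one_mul]
    exact hα.sub_le_dist_concat hβ hs ht
  · rw [one_mul]
    linarith [hα.dist_concat_le hβ hs ht, dist_triangle x y z, hα.dist_eq, hβ.dist_eq]

end Concat

theorem concat_quasigeodesic_of_gromov_le
    (x y z : X) (p : ℝ)
    (hgp : (dist y x + dist y z - dist x z) / 2 ≤ p)
    (α β : ℝ → X)
    (hα : IsGeodesicSegment (dist x y) α x y)
    (hβ : IsGeodesicSegment (dist y z) β y z) :
    IsQuasiGeodesic 1 (2 * p) (dist x y + dist y z)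
      (fun t => if t ≤ dist x y then α t else β (t - dist x y)) :=
  (hα.isQuasiGeodesic_concat hβ).mono (by rw [dist_comm y x] at hgp; linarith)

end Paper
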